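/- Let n be a positive even integer and U ∈ 𝒢ₙ. Then U admits a canonical decomposition U = (∏_{i=1}^{m} U_{pᵢ}(aᵢπ/n))·D whose parameters satisfy Σ_{i=1}^{m} min(aᵢ, n/2 − aᵢ) = 𝒯ₙ(U). -/

import Mathlib

attribute [local instance] Classical.propDecidable

open Matrix Complex

noncomputable def H0 : Matrix (Fin 2) (Fin 2) ℂ :=
  (1 / 2 : ℂ) • !![1 + I, 1 + I; 1 + I, -1 - I]

noncomputable def Smat : Matrix (Fin 2) (Fin 2) ℂ := !![1, 0; 0, I]

noncomputable def Uz (θ : ℝ) : Matrix (Fin 2) (Fin 2) ℂ :=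
  !![1, 0; 0, Complex.exp (I * θ)]

/-- The single-qubit Clifford group, the subgroup of U(2) generated by `H0` and `Smat`. -/
noncomputable def Cliff : Subgroup (Matrix.unitaryGroup (Fin 2) ℂ) :=
  Subgroup.closure {u : Matrix.unitaryGroup (Fin 2) ℂ |
    (u : Matrix (Fin 2) (Fin 2) ℂ) = H0 ∨ (u : Matrix (Fin 2) (Fin 2) ℂ) = Smat}

/-- The Clifford-cyclotomic group `𝒢ₙ`, the subgroup of U(2) generated by the
Clifford group together with `Uz (π/n)`. -/
noncomputable def Gcc (n : ℕ) : Subgroup (Matrix.unitaryGroup (Fin 2) ℂ) :=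
  Subgroup.closure ((Cliff : Set (Matrix.unitaryGroup (Fin 2) ℂ)) ∪
    {u : Matrix.unitaryGroup (Fin 2) ℂ |
      (u : Matrix (Fin 2) (Fin 2) ℂ) = Uz (Real.pi / n)})

inductive RotAxis | x | y | z
  deriving DecidableEq

noncomputable def Pauli : RotAxis → Matrix (Fin 2) (Fin 2) ℂ
  | RotAxis.x => !![0, 1; 1, 0]
  | RotAxis.y => !![0, -I; I, 0]
  | RotAxis.z => !![1, 0; 0, -1]

/-- `U_p(θ) = ((1+e^{iθ})/2)·I + ((1−e^{iθ})/2)·P`. -/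
noncomputable def Up (p : RotAxis) (θ : ℝ) : Matrix (Fin 2) (Fin 2) ℂ :=
  ((1 + Complex.exp (I * θ)) / 2) • (1 : Matrix (Fin 2) (Fin 2) ℂ) +
  ((1 - Complex.exp (I * θ)) / 2) • Pauli p

-- ===================== auxiliary development =====================

abbrev M2' := Matrix (Fin 2) (Fin 2) ℂ
abbrev UG' := Matrix.unitaryGroup (Fin 2) ℂ

lemma pauli_sq (p : RotAxis) : Pauli p * Pauli p = 1 := by
  cases p <;> ext i j <;> fin_cases i <;> fin_cases j <;>
    simp [Pauli, Matrix.mul_apply, Fin.sum_univ_two, Matrix.one_apply]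

lemma exp_I_add (a b : ℝ) : Complex.exp (I * (↑(a + b))) = Complex.exp (I*a) * Complex.exp (I*b) := by
  rw [← Complex.exp_add]; push_cast; ring_nf

lemma Up_mul (p : RotAxis) (a b : ℝ) : Up p a * Up p b = Up p (a + b) := by
  unfold Up
  rw [exp_I_add]
  generalize Complex.exp (I*↑a) = x
  generalize Complex.exp (I*↑b) = y
  simp only [add_mul, mul_add, smul_mul_assoc, mul_smul_comm, smul_smul, one_mul, mul_one, pauli_sq]
  match_scalars <;> ring

lemma Up_zero (p : RotAxis) : Up p 0 = 1 := by simp [Up]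

lemma exp_I_pi : Complex.exp (I * (Real.pi:ℝ)) = -1 := by
  rw [mul_comm]; exact Complex.exp_pi_mul_I

lemma exp_I_two_pi : Complex.exp (I * ((2*Real.pi:ℝ):ℂ)) = 1 := by
  push_cast
  rw [show I * (2*(Real.pi:ℂ)) = 2*Real.pi*I by ring]
  exact Complex.exp_two_pi_mul_I

lemma Up_pi (p : RotAxis) : Up p Real.pi = Pauli p := by
  rw [Up, exp_I_pi]
  simp

lemma Uz_eq_Up (θ : ℝ) : Uz θ = Up RotAxis.z θ := by
  ext i j; fin_cases i <;> fin_cases j <;>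
    simp [Uz, Up, Pauli, Matrix.one_apply] <;> ring

lemma exp_I_pi_div_two : Complex.exp (I * ((Real.pi/2:ℝ):ℂ)) = I := by
  push_cast
  rw [show I * ((Real.pi:ℂ)/2) = (Real.pi/2)*I by ring, Complex.exp_mul_I]
  have h1 : ((Real.pi:ℂ)/2) = ((Real.pi/2 : ℝ) : ℂ) := by push_cast; ring
  rw [h1, ← Complex.ofReal_cos, ← Complex.ofReal_sin]
  simp [Real.cos_pi_div_two, Real.sin_pi_div_two]

lemma Uz_pi_div_two : Uz (Real.pi/2) = Smat := by
  rw [Uz, exp_I_pi_div_two, Smat]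

lemma Uz_mul (a b : ℝ) : Uz a * Uz b = Uz (a + b) := by
  rw [Uz_eq_Up, Uz_eq_Up, Uz_eq_Up, Up_mul]

lemma Uz_zero : Uz 0 = 1 := by rw [Uz_eq_Up, Up_zero]

lemma Up_two_pi (p : RotAxis) : Up p (2*Real.pi) = 1 := by
  have : ((2*Real.pi : ℝ) : ℂ) = (2*Real.pi:ℝ) := rfl
  rw [Up, exp_I_two_pi]; simp

lemma Up_two_pi_add (p : RotAxis) (θ : ℝ) : Up p (θ + 2*Real.pi) = Up p θ := by
  rw [← Up_mul, Up_two_pi, mul_one]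

lemma Uz_neg (θ : ℝ) :
    Uz (-θ) = Complex.exp (I * ((-θ:ℝ):ℂ)) • (Pauli RotAxis.x * Uz θ * Pauli RotAxis.x) := by
  have e : I * ((-θ:ℝ):ℂ) = -(I*(θ:ℂ)) := by push_cast; ring
  have h : Complex.exp (-(I*(θ:ℂ))) * Complex.exp (I*(θ:ℂ)) = 1 := by
    rw [← Complex.exp_add, neg_add_cancel, Complex.exp_zero]
  rw [Uz, Uz, e]
  ext i j; fin_cases i <;> fin_cases j <;>
    simp [Pauli, Matrix.mul_apply, Fin.sum_univ_two, Matrix.smul_apply] <;>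
    first
      | rfl
      | linear_combination h
      | linear_combination -h

-- unitarity of generators
lemma H0_mem : H0 ∈ Matrix.unitaryGroup (Fin 2) ℂ := by
  rw [Matrix.mem_unitaryGroup_iff]
  ext i j
  fin_cases i <;> fin_cases j <;>
    simp [H0, Matrix.mul_apply, Fin.sum_univ_two, Matrix.one_apply, Matrix.star_apply] <;>
    ring_nf <;> norm_num [Complex.ext_iff]

lemma Smat_mem : Smat ∈ Matrix.unitaryGroup (Fin 2) ℂ := by
  rw [Matrix.mem_unitaryGroup_iff]
  ext i j
  fin_cases i <;> fin_cases j <;>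
    simp [Smat, Matrix.mul_apply, Fin.sum_univ_two, Matrix.one_apply, Matrix.star_apply]

noncomputable def uH0 : UG' := ⟨H0, H0_mem⟩
noncomputable def uS : UG' := ⟨Smat, Smat_mem⟩

lemma uH0_mem : uH0 ∈ Cliff := Subgroup.subset_closure (Or.inl rfl)
lemma uS_mem : uS ∈ Cliff := Subgroup.subset_closure (Or.inr rfl)

@[simp] lemma UG_coe_mul (u v : UG') : ((u*v : UG') : M2') = (u : M2') * (v : M2') := rfl
@[simp] lemma UG_coe_one : ((1 : UG') : M2') = 1 := rfl

lemma UG_mul_inv (u : UG') : (u : M2') * ((u⁻¹ : UG') : M2') = 1 := by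
  rw [← UG_coe_mul, mul_inv_cancel]; rfl

lemma UG_inv_mul (u : UG') : ((u⁻¹ : UG') : M2') * (u : M2') = 1 := by
  rw [← UG_coe_mul, inv_mul_cancel]; rfl

-- generator commutation relations
lemma H0_commZ : H0 * Pauli RotAxis.z = Pauli RotAxis.x * H0 := by
  ext i j; fin_cases i <;> fin_cases j <;>
    simp [H0, Pauli, Matrix.mul_apply, Fin.sum_univ_two] <;> ring

lemma H0_commX : H0 * Pauli RotAxis.x = Pauli RotAxis.z * H0 := by
  ext i j; fin_cases i <;> fin_cases j <;>
    simp [H0, Pauli, Matrix.mul_apply, Fin.sum_univ_two] <;> ring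

lemma H0_commY : H0 * Pauli RotAxis.y = (-1 : ℂ) • (Pauli RotAxis.y * H0) := by
  ext i j; fin_cases i <;> fin_cases j <;>
    simp [H0, Pauli, Matrix.mul_apply, Fin.sum_univ_two] <;> ring

lemma S_commZ : Smat * Pauli RotAxis.z = Pauli RotAxis.z * Smat := by
  ext i j; fin_cases i <;> fin_cases j <;>
    simp [Smat, Pauli, Matrix.mul_apply, Fin.sum_univ_two]

lemma S_commX : Smat * Pauli RotAxis.x = Pauli RotAxis.y * Smat := by
  ext i j; fin_cases i <;> fin_cases j <;>
    simp [Smat, Pauli, Matrix.mul_apply, Fin.sum_univ_two]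

lemma S_commY : Smat * Pauli RotAxis.y = (-1:ℂ) • (Pauli RotAxis.x * Smat) := by
  ext i j; fin_cases i <;> fin_cases j <;>
    simp [Smat, Pauli, Matrix.mul_apply, Fin.sum_univ_two] <;> ring

-- ============== Layer 2: Clifford conjugation ==============

lemma unitary_left_cancel (C : UG') {A B : M2'} (h : (C:M2') * A = (C:M2') * B) : A = B := by
  have h2 := congrArg (fun M => ((C⁻¹ : UG') : M2') * M) h
  simpa [← mul_assoc, UG_inv_mul] using h2

/-- The conjugation property for a Clifford element. -/
def ConjP (Cm : M2') : Prop :=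
  ∀ p : RotAxis, ∃ (q : RotAxis) (ε : ℂ), (ε = 1 ∨ ε = -1) ∧
    Cm * Pauli p = ε • (Pauli q * Cm)

lemma pauli_mul_ne_smul_one {p q : RotAxis} (hpq : p ≠ q) {ε : ℂ}
    (hε : ε = 1 ∨ ε = -1) : Pauli p * Pauli q ≠ ε • (1 : M2') := by
  intro hE
  have h00 := congrFun (congrFun hE 0) 0
  have h01 := congrFun (congrFun hE 0) 1
  have h11 := congrFun (congrFun hE 1) 1
  rcases hε with rfl | rfl <;> cases p <;> cases q <;>
    simp_all [Pauli, Matrix.mul_apply, Fin.sum_univ_two, Matrix.smul_apply, Matrix.one_apply,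
      Complex.ext_iff] <;> norm_num at *

lemma conjP_one : ConjP ((1 : UG') : M2') := by
  intro p
  exact ⟨p, 1, Or.inl rfl, by simp⟩

lemma conjP_H0 : ConjP H0 := by
  intro p
  cases p with
  | x => exact ⟨RotAxis.z, 1, Or.inl rfl, by simpa using H0_commX⟩
  | y => exact ⟨RotAxis.y, -1, Or.inr rfl, by simpa using H0_commY⟩
  | z => exact ⟨RotAxis.x, 1, Or.inl rfl, by simpa using H0_commZ⟩

lemma conjP_S : ConjP Smat := by
  intro p
  cases p with
  | x => exact ⟨RotAxis.y, 1, Or.inl rfl, by simpa using S_commX⟩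
  | y => exact ⟨RotAxis.x, -1, Or.inr rfl, by simpa using S_commY⟩
  | z => exact ⟨RotAxis.z, 1, Or.inl rfl, by simpa using S_commZ⟩

lemma conjP_mul {A B : M2'} (hA : ConjP A) (hB : ConjP B) : ConjP (A * B) := by
  intro p
  obtain ⟨q, ε, hε, hB1⟩ := hB p
  obtain ⟨r, δ, hδ, hA1⟩ := hA q
  refine ⟨r, ε * δ, ?_, ?_⟩
  · rcases hε with rfl | rfl <;> rcases hδ with rfl | rfl <;> simp
  · calc A * B * Pauli p = A * (B * Pauli p) := by rw [mul_assoc]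
    _ = A * (ε • (Pauli q * B)) := by rw [hB1]
    _ = ε • (A * Pauli q * B) := by rw [mul_smul_comm, mul_assoc]
    _ = ε • ((δ • (Pauli r * A)) * B) := by rw [hA1]
    _ = (ε * δ) • (Pauli r * (A * B)) := by
        rw [smul_mul_assoc, smul_smul, mul_assoc]

lemma rotaxis_cases (a b c p : RotAxis) (hab : a ≠ b) (hac : a ≠ c) (hbc : b ≠ c) :
    p = a ∨ p = b ∨ p = c := by
  cases a <;> cases b <;> cases c <;> cases p <;> simp_all

lemma conjP_inj (C : UG') (h : ConjP (C : M2')) {p p' q : RotAxis} {ε ε' : ℂ}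
    (hε : ε = 1 ∨ ε = -1) (hε' : ε' = 1 ∨ ε' = -1)
    (h1 : (C:M2') * Pauli p = ε • (Pauli q * (C:M2')))
    (h2 : (C:M2') * Pauli p' = ε' • (Pauli q * (C:M2'))) (hpp : p ≠ p') : False := by
  have key : (C:M2') * (Pauli p * Pauli p') = (C:M2') * ((ε * ε') • (1:M2')) := by
    calc (C:M2') * (Pauli p * Pauli p') = ((C:M2') * Pauli p) * Pauli p' := by rw [mul_assoc]
    _ = ε • (Pauli q * ((C:M2') * Pauli p')) := by rw [h1, smul_mul_assoc, mul_assoc]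
    _ = ε • (Pauli q * (ε' • (Pauli q * (C:M2')))) := by rw [h2]
    _ = (ε * ε') • (Pauli q * Pauli q * (C:M2')) := by
        rw [mul_smul_comm, smul_smul, mul_assoc]
    _ = (C:M2') * ((ε * ε') • (1:M2')) := by
        rw [pauli_sq, one_mul, mul_smul_comm, mul_one]
  have := unitary_left_cancel C key
  exact pauli_mul_ne_smul_one hpp
    (by rcases hε with rfl|rfl <;> rcases hε' with rfl|rfl <;> simp) this

lemma conjP_inv (C : UG') (h : ConjP (C : M2')) : ConjP ((C⁻¹ : UG') : M2') := by
  intro p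
  obtain ⟨qx, εx, hεx, hx⟩ := h RotAxis.x
  obtain ⟨qy, εy, hεy, hy⟩ := h RotAxis.y
  obtain ⟨qz, εz, hεz, hz⟩ := h RotAxis.z
  have hxy : qx ≠ qy := fun hq => conjP_inj C h hεx hεy hx (hq ▸ hy) (by simp)
  have hxz : qx ≠ qz := fun hq => conjP_inj C h hεx hεz hx (hq ▸ hz) (by simp)
  have hyz : qy ≠ qz := fun hq => conjP_inj C h hεy hεz hy (hq ▸ hz) (by simp)
  have key : ∀ (r : RotAxis) (q : RotAxis) (ε : ℂ), (ε = 1 ∨ ε = -1) →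
      (C:M2') * Pauli r = ε • (Pauli q * (C:M2')) →
      ((C⁻¹ : UG') : M2') * Pauli q = ε • (Pauli r * ((C⁻¹ : UG') : M2')) := by
    intro r q ε hε heq
    have hee : ε * ε = 1 := by rcases hε with rfl | rfl <;> norm_num
    have step : Pauli r * ((C⁻¹ : UG'):M2') = ε • (((C⁻¹ : UG'):M2') * Pauli q) := by
      apply unitary_left_cancel C
      calc (C:M2') * (Pauli r * ((C⁻¹ : UG'):M2'))
          = ((C:M2') * Pauli r) * ((C⁻¹ : UG'):M2') := by rw [mul_assoc]
        _ = ε • (Pauli q * ((C:M2') * ((C⁻¹:UG'):M2'))) := by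
            rw [heq, smul_mul_assoc, mul_assoc]
        _ = ε • Pauli q := by rw [UG_mul_inv, mul_one]
        _ = (C:M2') * (ε • (((C⁻¹ : UG'):M2') * Pauli q)) := by
            rw [mul_smul_comm, ← mul_assoc, UG_mul_inv, one_mul]
    calc ((C⁻¹ : UG') : M2') * Pauli q
        = (ε*ε) • (((C⁻¹ : UG') : M2') * Pauli q) := by rw [hee, one_smul]
      _ = ε • (ε • (((C⁻¹ : UG') : M2') * Pauli q)) := by rw [smul_smul]
      _ = ε • (Pauli r * ((C⁻¹ : UG'):M2')) := by rw [← step]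
  rcases rotaxis_cases qx qy qz p hxy hxz hyz with rfl | rfl | rfl
  · exact ⟨RotAxis.x, εx, hεx, key _ _ _ hεx hx⟩
  · exact ⟨RotAxis.y, εy, hεy, key _ _ _ hεy hy⟩
  · exact ⟨RotAxis.z, εz, hεz, key _ _ _ hεz hz⟩

lemma cliff_conj {C : UG'} (hC : C ∈ Cliff) : ConjP (C : M2') := by
  induction hC using Subgroup.closure_induction with
  | mem x hx =>
      rcases hx with h | h
      · rw [h]; exact conjP_H0
      · rw [h]; exact conjP_S
  | one => exact conjP_one
  | mul x y hx hy ihx ihy => exact conjP_mul ihx ihy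
  | inv x hx ih => exact conjP_inv x ih

-- ============== Layer 3: axis conjugators ==============

lemma conj_expand {Cm : M2'} {p q : RotAxis} {ε : ℂ}
    (h : Cm * Pauli p = ε • (Pauli q * Cm)) (θ : ℝ) :
    Cm * Up p θ = (((1 + Complex.exp (I*θ))/2) • (1:M2') +
      (((1 - Complex.exp (I*θ))/2) * ε) • Pauli q) * Cm := by
  rw [Up, mul_add, mul_smul_comm, mul_smul_comm, mul_one, h, smul_smul, add_mul,
    smul_mul_assoc, smul_mul_assoc, one_mul]

lemma conj_expand_pos {Cm : M2'} {p q : RotAxis}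
    (h : Cm * Pauli p = (1:ℂ) • (Pauli q * Cm)) (θ : ℝ) :
    Cm * Up p θ = Up q θ * Cm := by
  rw [conj_expand h θ, mul_one, Up]

lemma conj_expand_neg {Cm : M2'} {p q : RotAxis}
    (h : Cm * Pauli p = (-1:ℂ) • (Pauli q * Cm)) (θ : ℝ) :
    Cm * Up p θ = Complex.exp (I*θ) • (Up q (-θ) * Cm) := by
  rw [conj_expand h θ, ← smul_mul_assoc]
  congr 1
  have e : I * ((-θ:ℝ):ℂ) = -(I*(θ:ℂ)) := by push_cast; ring
  rw [Up, e]
  have h1 : Complex.exp (I*(θ:ℂ)) * Complex.exp (-(I*(θ:ℂ))) = 1 := by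
    rw [← Complex.exp_add, add_neg_cancel, Complex.exp_zero]
  match_scalars
  · linear_combination (-1/2:ℂ) * h1
  · linear_combination (1/2:ℂ) * h1

noncomputable def axisC : RotAxis → UG'
  | RotAxis.x => uH0
  | RotAxis.y => uS * uH0
  | RotAxis.z => 1

lemma axisC_mem (p : RotAxis) : axisC p ∈ Cliff := by
  cases p
  · exact uH0_mem
  · exact mul_mem uS_mem uH0_mem
  · exact one_mem _

lemma axisC_comm (p : RotAxis) :
    ((axisC p : UG') : M2') * Pauli RotAxis.z = Pauli p * ((axisC p : UG') : M2') := by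
  cases p
  · exact H0_commZ
  · show (Smat * H0) * Pauli RotAxis.z = Pauli RotAxis.y * (Smat * H0)
    rw [mul_assoc, H0_commZ, ← mul_assoc, S_commX, mul_assoc]
  · show ((1:UG'):M2') * Pauli RotAxis.z = Pauli RotAxis.z * ((1:UG'):M2')
    rw [UG_coe_one, one_mul, mul_one]

lemma axisC_Uz (p : RotAxis) (θ : ℝ) :
    ((axisC p : UG') : M2') * Uz θ = Up p θ * ((axisC p : UG') : M2') := by
  rw [Uz_eq_Up]
  exact conj_expand_pos (by simpa using axisC_comm p) θ

noncomputable def uQuarter (p : RotAxis) : UG' := axisC p * uS * (axisC p)⁻¹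

lemma uQuarter_mem (p : RotAxis) : uQuarter p ∈ Cliff :=
  mul_mem (mul_mem (axisC_mem p) uS_mem) (inv_mem (axisC_mem p))

lemma uQuarter_coe (p : RotAxis) : ((uQuarter p : UG') : M2') = Up p (Real.pi/2) := by
  show ((axisC p : UG') : M2') * Smat * ((axisC p)⁻¹ : UG') = _
  rw [← Uz_pi_div_two, axisC_Uz, mul_assoc, UG_mul_inv, mul_one]

noncomputable def uPauli (p : RotAxis) : UG' := axisC p * (uS * uS) * (axisC p)⁻¹

lemma uPauli_mem (p : RotAxis) : uPauli p ∈ Cliff :=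
  mul_mem (mul_mem (axisC_mem p) (mul_mem uS_mem uS_mem)) (inv_mem (axisC_mem p))

lemma uPauli_coe (p : RotAxis) : ((uPauli p : UG') : M2') = Pauli p := by
  show ((axisC p : UG') : M2') * (Smat * Smat) * ((axisC p)⁻¹ : UG') = _
  have hS : Smat * Smat = Uz Real.pi := by
    rw [← Uz_pi_div_two, Uz_mul]; norm_num
  rw [hS, axisC_Uz, Up_pi, mul_assoc, UG_mul_inv, mul_one]

lemma up_angle_sum (x y : ℕ) (n : ℕ) (p : RotAxis) :
    Up p ((x:ℝ)*Real.pi/n) * Up p ((y:ℝ)*Real.pi/n) = Up p (((x+y:ℕ):ℝ)*Real.pi/n) := by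
  rw [Up_mul]
  congr 1
  push_cast
  ring

-- ============== Layer 4: canonical lists ==============

def GoodList (n : ℕ) (L : List (RotAxis × ℕ)) : Prop :=
  L.Chain' (fun r r' => r.1 ≠ r'.1) ∧ ∀ r ∈ L, 1 ≤ r.2 ∧ r.2 < n/2

noncomputable def Lprod (n : ℕ) (L : List (RotAxis × ℕ)) : M2' :=
  (L.map fun r => Up r.1 ((r.2 : ℝ) * Real.pi / n)).prod

def Lwt (n : ℕ) (L : List (RotAxis × ℕ)) : ℕ :=
  (L.map fun r => min r.2 (n/2 - r.2)).sum

lemma Lprod_nil (n : ℕ) : Lprod n [] = 1 := rfl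

lemma Lprod_append (n : ℕ) (A B : List (RotAxis × ℕ)) :
    Lprod n (A ++ B) = Lprod n A * Lprod n B := by
  simp [Lprod, List.map_append, List.prod_append]

lemma Lprod_singleton (n : ℕ) (r : RotAxis × ℕ) :
    Lprod n [r] = Up r.1 ((r.2 : ℝ) * Real.pi / n) := by
  simp [Lprod]

lemma Lprod_cons (n : ℕ) (r : RotAxis × ℕ) (L : List (RotAxis × ℕ)) :
    Lprod n (r :: L) = Up r.1 ((r.2 : ℝ) * Real.pi / n) * Lprod n L := by
  simp [Lprod]

lemma Lwt_nil (n : ℕ) : Lwt n [] = 0 := rfl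

lemma Lwt_append (n : ℕ) (A B : List (RotAxis × ℕ)) :
    Lwt n (A ++ B) = Lwt n A + Lwt n B := by
  simp [Lwt, List.map_append, List.sum_append]

lemma Lwt_singleton (n : ℕ) (r : RotAxis × ℕ) :
    Lwt n [r] = min r.2 (n/2 - r.2) := by simp [Lwt]

lemma Lwt_cons (n : ℕ) (r : RotAxis × ℕ) (L : List (RotAxis × ℕ)) :
    Lwt n (r :: L) = min r.2 (n/2 - r.2) + Lwt n L := by simp [Lwt]

lemma S_sq : Smat * Smat = Uz Real.pi := by
  rw [← Uz_pi_div_two, Uz_mul]; norm_num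

lemma Uz_pi_pow (n : ℕ) (hn : 0 < n) (q : ℕ) :
    Uz (((q*n : ℕ):ℝ)*Real.pi/n) = (((uS*uS)^q : UG') : M2') := by
  induction q with
  | zero => simp [Uz_zero]
  | succ q ih =>
      have hsplit : (((q+1)*n : ℕ):ℝ)*Real.pi/n
          = ((q*n : ℕ):ℝ)*Real.pi/n + Real.pi := by
        have hn' : (n:ℝ) ≠ 0 := Nat.cast_ne_zero.mpr hn.ne'
        push_cast
        field_simp
      rw [hsplit, ← Uz_mul, ih, pow_succ, UG_coe_mul, ← S_sq]
      rfl

lemma stepUz (n : ℕ) (hn : 0 < n) (hne : Even n) (s : ℕ) :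
    ∃ (a : ℕ) (K : UG'), K ∈ Cliff ∧
      Uz ((s:ℝ)*Real.pi/n) = Uz ((a:ℝ)*Real.pi/n) * (K : M2') ∧
      (a = 0 ∨ (1 ≤ a ∧ a < n/2)) ∧ min a (n/2 - a) ≤ s := by
  obtain ⟨k, hk⟩ := hne
  have hk2 : n = 2 * k := by omega
  have hh : n / 2 = k := by omega
  have hn' : (n:ℝ) ≠ 0 := Nat.cast_ne_zero.mpr hn.ne'
  have hkpos : 0 < k := by omega
  set r := s % n with hr
  set q := s / n with hq
  have hrn : r < n := Nat.mod_lt _ hn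
  have hrs : r ≤ s := Nat.mod_le _ _
  have hsrq : r + n * q = s := Nat.mod_add_div s n
  have hcase : s = r ∨ n ≤ s := by
    rcases Nat.eq_zero_or_pos q with h0 | h0
    · left; rw [h0, mul_zero] at hsrq; omega
    · right
      have h1 : n ≤ n * q := Nat.le_mul_of_pos_right n h0
      linarith [hsrq, h1]
  have hzq : ((uS*uS)^q : UG') ∈ Cliff := pow_mem (mul_mem uS_mem uS_mem) q
  have hsplit : Uz ((s:ℝ)*Real.pi/n) = Uz ((r:ℝ)*Real.pi/n) * (((uS*uS)^q : UG') : M2') := by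
    have hsR : (r:ℝ) + (n:ℝ)*(q:ℝ) = (s:ℝ) := by exact_mod_cast congrArg (Nat.cast (R := ℝ)) hsrq
    have hang : (s:ℝ)*Real.pi/n = (r:ℝ)*Real.pi/n + ((q*n:ℕ):ℝ)*Real.pi/n := by
      push_cast
      linear_combination (-Real.pi/(n:ℝ)) * hsR
    rw [← Uz_pi_pow n hn q, Uz_mul, ← hang]
  rcases Nat.lt_or_ge r k with hrk | hrk
  · rcases Nat.eq_zero_or_pos r with h0 | h0
    · exact ⟨0, (uS*uS)^q, hzq, by rw [hsplit, h0], Or.inl rfl, by omega⟩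
    · exact ⟨r, (uS*uS)^q, hzq, hsplit, Or.inr ⟨h0, by omega⟩, by omega⟩
  · -- r ≥ k : split off an S gate
    have hkR : (k:ℝ) ≠ 0 := Nat.cast_ne_zero.mpr hkpos.ne'
    have hSc : Uz ((r:ℝ)*Real.pi/n) = Uz (((r-k:ℕ):ℝ)*Real.pi/n) * Smat := by
      have hc : ((r-k:ℕ):ℝ) = (r:ℝ) - k := by
        push_cast [Nat.cast_sub hrk]; ring
      have hang : (r:ℝ)*Real.pi/n = ((r-k:ℕ):ℝ)*Real.pi/n + Real.pi/2 := by
        rw [hc, hk2]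
        push_cast
        field_simp
        ring
      rw [← Uz_pi_div_two, Uz_mul, ← hang]
    have hmem : (uS * (uS*uS)^q : UG') ∈ Cliff := mul_mem uS_mem hzq
    have heq : Uz ((s:ℝ)*Real.pi/n)
        = Uz (((r-k:ℕ):ℝ)*Real.pi/n) * ((uS * (uS*uS)^q : UG') : M2') := by
      rw [hsplit, hSc, UG_coe_mul, mul_assoc]
      rfl
    rcases Nat.eq_zero_or_pos (r - k) with h0 | h0
    · exact ⟨0, uS * (uS*uS)^q, hmem, by rw [heq, h0], Or.inl rfl, by omega⟩
    · refine ⟨r - k, uS * (uS*uS)^q, hmem, heq, Or.inr ⟨h0, by omega⟩, ?_⟩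
      omega

lemma conjStep (n : ℕ) (hn : 0 < n) (hne : Even n) (D : UG') (hD : D ∈ Cliff)
    (a : ℕ) (h1 : 1 ≤ a) (h2 : a < n/2) :
    ∃ (q : RotAxis) (a' : ℕ) (K' : UG') (χ : ℝ), K' ∈ Cliff ∧
      1 ≤ a' ∧ a' < n/2 ∧ min a' (n/2 - a') = min a (n/2 - a) ∧
      (D : M2') * Uz ((a:ℝ)*Real.pi/n) =
        Complex.exp (I*(χ:ℂ)) • (Up q ((a':ℝ)*Real.pi/n) * ((K' : M2') * (D : M2'))) := by
  obtain ⟨k, hk⟩ := hne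
  have hh : n / 2 = k := by omega
  have hn' : (n:ℝ) ≠ 0 := Nat.cast_ne_zero.mpr hn.ne'
  obtain ⟨q, ε, hε, hcomm⟩ := cliff_conj hD RotAxis.z
  rcases hε with rfl | rfl
  · refine ⟨q, a, 1, 0, one_mem _, h1, h2, rfl, ?_⟩
    rw [Uz_eq_Up, conj_expand_pos hcomm]
    norm_num
  · refine ⟨q, k - a, uPauli q * uQuarter q, (a:ℝ)*Real.pi/n,
      mul_mem (uPauli_mem q) (uQuarter_mem q), by omega, by omega, by omega, ?_⟩
    rw [Uz_eq_Up, conj_expand_neg hcomm]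
    congr 1
    have hcoe : ((uPauli q * uQuarter q : UG') : M2') = Pauli q * Up q (Real.pi/2) := by
      rw [UG_coe_mul, uPauli_coe, uQuarter_coe]
    rw [hcoe, ← Up_pi q, Up_mul, ← mul_assoc, Up_mul]
    have hc : ((k - a : ℕ):ℝ) = (k:ℝ) - (a:ℝ) := by
      have : a ≤ k := by omega
      push_cast [Nat.cast_sub this]; ring
    have hnk : (n:ℝ) = (k:ℝ) + (k:ℝ) := by exact_mod_cast congrArg (Nat.cast (R := ℝ)) hk
    have hkR : (k:ℝ) ≠ 0 := by
      have : 0 < k := by omega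
      positivity
    have hang : -((a:ℝ)*Real.pi/n) + 2*Real.pi = ((k-a:ℕ):ℝ)*Real.pi/n + (Real.pi + Real.pi/2) := by
      rw [hc, hnk]
      field_simp
      ring
    rw [← Up_two_pi_add q (-((a:ℝ)*Real.pi/n)), hang]

-- ============== Layer 5: pushing a rotation onto a canonical list ==============

lemma goodlist_concat_replace (n : ℕ) (M : List (RotAxis × ℕ)) (r x : RotAxis × ℕ)
    (hg : GoodList n (M ++ [r])) (hax : x.1 = r.1) (hb : 1 ≤ x.2 ∧ x.2 < n/2) :
    GoodList n (M ++ [x]) := by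
  obtain ⟨hc, hbd⟩ := hg
  replace hc := List.isChain_append.mp hc
  refine ⟨List.isChain_append.mpr ⟨hc.1, List.isChain_singleton _, ?_⟩, ?_⟩
  · intro y hy z hz
    simp only [List.head?_cons, Option.mem_some_iff] at hz
    subst hz
    have := hc.2.2 y hy r (by simp)
    rw [hax]
    exact this
  · intro y hy
    rcases List.mem_append.mp hy with h | h
    · exact hbd y (List.mem_append.mpr (Or.inl h))
    · simp only [List.mem_singleton] at h; subst h; exact hb

lemma goodlist_concat_new (n : ℕ) (L : List (RotAxis × ℕ)) (x : RotAxis × ℕ)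
    (hg : GoodList n L) (hlast : ∀ y ∈ L.getLast?, y.1 ≠ x.1)
    (hb : 1 ≤ x.2 ∧ x.2 < n/2) : GoodList n (L ++ [x]) := by
  refine ⟨List.isChain_append.mpr ⟨hg.1, List.isChain_singleton _, ?_⟩, ?_⟩
  · intro y hy z hz
    simp only [List.head?_cons, Option.mem_some_iff] at hz
    subst hz
    exact hlast y hy
  · intro y hy
    rcases List.mem_append.mp hy with h | h
    · exact hg.2 y h
    · simp only [List.mem_singleton] at h; subst h; exact hb

lemma getLast?_app {α : Type*} (M : List α) (r : α) : (M ++ [r]).getLast? = some r :=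
  List.getLast?_concat

lemma pushRot (n : ℕ) (hn : 0 < n) (hne : Even n) (L : List (RotAxis × ℕ)) (hL : GoodList n L)
    (q : RotAxis) (a' : ℕ) (h1 : 1 ≤ a') (h2 : a' < n/2) :
    ∃ (L' : List (RotAxis × ℕ)) (K : UG'), GoodList n L' ∧ K ∈ Cliff ∧
      Lprod n L * Up q ((a':ℝ)*Real.pi/n) = Lprod n L' * (K : M2') ∧
      Lwt n L' ≤ Lwt n L + min a' (n/2 - a') := by
  obtain ⟨k, hk⟩ := hne
  have hh : n/2 = k := by omega
  have hn' : (n:ℝ) ≠ 0 := Nat.cast_ne_zero.mpr hn.ne'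
  have hkpos : 0 < k := by omega
  have hkR : (k:ℝ) ≠ 0 := Nat.cast_ne_zero.mpr hkpos.ne'
  have hnk : (n:ℝ) = (k:ℝ) + (k:ℝ) := by exact_mod_cast congrArg (Nat.cast (R := ℝ)) hk
  rcases List.eq_nil_or_concat L with rfl | ⟨M, r, rfl⟩
  · refine ⟨[(q, a')], 1, ?_, one_mem _, ?_, ?_⟩
    · exact ⟨List.isChain_singleton _,
        by intro r hr; simp only [List.mem_singleton] at hr; subst hr; exact ⟨h1, h2⟩⟩
    · rw [Lprod_nil, Lprod_singleton, one_mul, UG_coe_one, mul_one]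
    · rw [Lwt_singleton, Lwt_nil]; omega
  · rw [List.concat_eq_append] at *
    have hgM : GoodList n M :=
      ⟨(List.isChain_append.mp hL.1).1, fun y hy => hL.2 y (by simp [hy])⟩
    have hrb : 1 ≤ r.2 ∧ r.2 < n/2 := hL.2 r (by simp)
    have hprodL : Lprod n (M ++ [r]) = Lprod n M * Up r.1 ((r.2:ℝ)*Real.pi/n) := by
      rw [Lprod_append, Lprod_singleton]
    have hwtL : Lwt n (M ++ [r]) = Lwt n M + min r.2 (n/2 - r.2) := by
      rw [Lwt_append, Lwt_singleton]
    by_cases hax : r.1 = q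
    · have hmerge : Up r.1 ((r.2:ℝ)*Real.pi/n) * Up q ((a':ℝ)*Real.pi/n)
          = Up q (((r.2 + a' : ℕ):ℝ)*Real.pi/n) := by
        rw [hax]; exact up_angle_sum r.2 a' n q
      set b := r.2 + a' with hbdef
      rcases lt_trichotomy b k with hbk | hbk | hbk
      · refine ⟨M ++ [(q, b)], 1, ?_, one_mem _, ?_, ?_⟩
        · exact goodlist_concat_replace n M r (q,b) hL hax.symm ⟨by omega, by omega⟩
        · rw [hprodL, mul_assoc, hmerge, Lprod_append, Lprod_singleton, UG_coe_one, mul_one]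
        · rw [Lwt_append, Lwt_singleton, hwtL]; omega
      · refine ⟨M, uQuarter q, hgM, uQuarter_mem q, ?_, ?_⟩
        · have hbr : ((b:ℕ):ℝ) = (k:ℝ) := by exact_mod_cast congrArg (Nat.cast (R := ℝ)) hbk
          have hang2 : ((b:ℕ):ℝ)*Real.pi/n = Real.pi/2 := by
            rw [hbr, hnk]; field_simp; ring
          rw [hprodL, mul_assoc, hmerge, uQuarter_coe, hang2]
        · rw [hwtL]; omega
      · refine ⟨M ++ [(q, b - k)], uQuarter q, ?_, uQuarter_mem q, ?_, ?_⟩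
        · exact goodlist_concat_replace n M r (q, b-k) hL hax.symm ⟨by omega, by omega⟩
        · rw [hprodL, mul_assoc, hmerge, Lprod_append, Lprod_singleton, uQuarter_coe]
          have hc : ((b-k:ℕ):ℝ) = (b:ℝ) - k := by
            have : k ≤ b := by omega
            push_cast [Nat.cast_sub this]; ring
          have hang3 : ((b:ℕ):ℝ)*Real.pi/n = ((b-k:ℕ):ℝ)*Real.pi/n + Real.pi/2 := by
            rw [hc, hnk]; field_simp; ring
          have hsplit : Up q ((b:ℝ)*Real.pi/n)
              = Up q (((b-k:ℕ):ℝ)*Real.pi/n) * Up q (Real.pi/2) := by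
            rw [Up_mul, ← hang3]
          rw [hsplit, mul_assoc]
        · rw [Lwt_append, Lwt_singleton, hwtL]; omega
    · refine ⟨(M ++ [r]) ++ [(q, a')], 1, ?_, one_mem _, ?_, ?_⟩
      · refine goodlist_concat_new n (M ++ [r]) (q,a') hL ?_ ⟨h1, h2⟩
        intro y hy
        rw [getLast?_app] at hy
        simp only [Option.mem_some_iff] at hy
        subst hy
        exact hax
      · simp [Lprod_append, Lprod_cons, Lprod_singleton, Lprod_nil, mul_assoc]
      · simp only [Lwt_append, Lwt_singleton, Lwt_cons, Lwt_nil]; omega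

-- ============== Layer 6: words and the two directions ==============

lemma step_main (n : ℕ) (hn : 0 < n) (hne : Even n) (L : List (RotAxis × ℕ)) (hL : GoodList n L)
    (Dg : UG') (hD : Dg ∈ Cliff) (s : ℕ) :
    ∃ (L' : List (RotAxis × ℕ)) (Dg' : UG') (χ : ℝ), GoodList n L' ∧ Dg' ∈ Cliff ∧
      Lprod n L * (Dg : M2') * Uz ((s:ℝ)*Real.pi/n) =
        Complex.exp (I*(χ:ℂ)) • (Lprod n L' * (Dg' : M2')) ∧
      Lwt n L' ≤ Lwt n L + s := by
  obtain ⟨a, K, hK, hUz, ha, hmin⟩ := stepUz n hn hne s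
  rcases ha with rfl | ⟨ha1, ha2⟩
  · refine ⟨L, Dg * K, 0, hL, mul_mem hD hK, ?_, by omega⟩
    rw [hUz]
    have h0 : Uz (((0:ℕ):ℝ)*Real.pi/n) = 1 := by norm_num [Uz_zero]
    rw [h0, one_mul, UG_coe_mul]
    have : Complex.exp (I*((0:ℝ):ℂ)) = 1 := by norm_num [Complex.exp_zero]
    rw [this, one_smul, mul_assoc]
  · obtain ⟨q, a', K', χ, hK', ha'1, ha'2, hminEq, hconj⟩ := conjStep n hn hne Dg hD a ha1 ha2
    obtain ⟨L', K'', hL', hK'', hpush, hwt⟩ := pushRot n hn hne L hL q a' ha'1 ha'2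
    refine ⟨L', K'' * (K' * (Dg * K)), χ, hL',
      mul_mem hK'' (mul_mem hK' (mul_mem hD hK)), ?_, by omega⟩
    rw [hUz, ← mul_assoc, mul_assoc (Lprod n L) _ _, hconj, mul_smul_comm, smul_mul_assoc]
    congr 1
    rw [← mul_assoc, ← mul_assoc, hpush]
    simp [mul_assoc]

def WordP (n : ℕ) (w : List (UG' × ℕ)) (E : UG') (V : M2') : Prop :=
  (∀ x ∈ w, x.1 ∈ Cliff) ∧ E ∈ Cliff ∧
  V = (w.map fun x => (x.1 : M2') * Uz ((x.2:ℝ) * Real.pi / n)).prod * (E : M2')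

def wcost (w : List (UG' × ℕ)) : ℕ := (w.map Prod.snd).sum

lemma word_to_canonical (n : ℕ) (hn : 0 < n) (hne : Even n) (w : List (UG' × ℕ)) :
    ∀ (E : UG') (V : M2'), WordP n w E V →
    ∃ (L : List (RotAxis × ℕ)) (Dg : UG') (ψ : ℝ), GoodList n L ∧ Dg ∈ Cliff ∧
      V = Complex.exp (I*(ψ:ℂ)) • (Lprod n L * (Dg : M2')) ∧ Lwt n L ≤ wcost w := by
  induction w using List.reverseRecOn with
  | nil =>
      rintro E V ⟨_, hE, hV⟩
      refine ⟨[], E, 0, ⟨List.isChain_nil, by simp⟩, hE, ?_, by simp [Lwt_nil, wcost]⟩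
      rw [hV]
      norm_num [Lprod_nil]
  | append_singleton t x ih =>
      rintro E V ⟨hmem, hE, hV⟩
      obtain ⟨L, Dg, ψ, hL, hDg, hVt, hwt⟩ :=
        ih x.1 ((t.map fun y => (y.1 : M2') * Uz ((y.2:ℝ) * Real.pi / n)).prod * (x.1 : M2'))
          ⟨fun y hy => hmem y (by simp [hy]), hmem x (by simp), rfl⟩
      obtain ⟨L', Dg', χ, hL', hDg', heq, hwt'⟩ := step_main n hn hne L hL Dg hDg x.2
      refine ⟨L', Dg' * E, ψ + χ, hL', mul_mem hDg' hE, ?_, ?_⟩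
      · rw [hV, List.map_append, List.prod_append]
        simp only [List.map_cons, List.map_nil, List.prod_cons, List.prod_nil, mul_one]
        rw [show ((t.map fun y => (y.1 : M2') * Uz ((y.2:ℝ) * Real.pi / n)).prod *
              ((x.1 : M2') * Uz ((x.2:ℝ) * Real.pi / n)))
            = ((t.map fun y => (y.1 : M2') * Uz ((y.2:ℝ) * Real.pi / n)).prod * (x.1 : M2')) *
              Uz ((x.2:ℝ) * Real.pi / n) from by rw [mul_assoc]]
        rw [hVt, smul_mul_assoc, smul_mul_assoc, heq, exp_I_add, mul_smul, UG_coe_mul]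
        rw [smul_mul_assoc, mul_assoc]
      · have hcost : wcost (t ++ [x]) = wcost t + x.2 := by simp [wcost]
        omega

lemma rot_word (n : ℕ) (hn : 0 < n) (hne : Even n) (p : RotAxis) (a : ℕ)
    (h1 : 1 ≤ a) (h2 : a < n/2) :
    ∃ (A B : UG') (χ : ℝ), A ∈ Cliff ∧ B ∈ Cliff ∧
      Up p ((a:ℝ)*Real.pi/n) =
        Complex.exp (I*(χ:ℂ)) •
          ((A : M2') * Uz (((min a (n/2-a) : ℕ):ℝ)*Real.pi/n) * (B : M2')) := by
  obtain ⟨k, hk⟩ := hne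
  have hh : n/2 = k := by omega
  have hn' : (n:ℝ) ≠ 0 := Nat.cast_ne_zero.mpr hn.ne'
  have hkpos : 0 < k := by omega
  have hkR : (k:ℝ) ≠ 0 := Nat.cast_ne_zero.mpr hkpos.ne'
  have hnk : (n:ℝ) = (k:ℝ) + (k:ℝ) := by exact_mod_cast congrArg (Nat.cast (R := ℝ)) hk
  rcases le_or_gt a (n/2 - a) with hle | hlt
  · have hmin : min a (n/2 - a) = a := min_eq_left hle
    refine ⟨axisC p, (axisC p)⁻¹, 0, axisC_mem p, inv_mem (axisC_mem p), ?_⟩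
    rw [hmin]
    have hz : Complex.exp (I*((0:ℝ):ℂ)) = 1 := by norm_num [Complex.exp_zero]
    rw [hz, one_smul, axisC_Uz, mul_assoc, UG_mul_inv, mul_one]
  · have hmin : min a (n/2 - a) = n/2 - a := min_eq_right hlt.le
    set c := n/2 - a with hcdef
    refine ⟨axisC p * uPauli RotAxis.x, uPauli RotAxis.x * (axisC p)⁻¹ * uQuarter p,
      -((c:ℝ)*Real.pi/n),
      mul_mem (axisC_mem p) (uPauli_mem _),
      mul_mem (mul_mem (uPauli_mem _) (inv_mem (axisC_mem p))) (uQuarter_mem p), ?_⟩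
    rw [hmin]
    have hang : -((c:ℝ)*Real.pi/n) + Real.pi/2 = (a:ℝ)*Real.pi/n := by
      have hc : ((c:ℕ):ℝ) = (k:ℝ) - a := by
        rw [hcdef, hh]
        have : a ≤ k := by omega
        push_cast [Nat.cast_sub this]; ring
      rw [hc, hnk]
      field_simp
      ring
    have e1 : Up p ((a:ℝ)*Real.pi/n) = Up p (-((c:ℝ)*Real.pi/n)) * Up p (Real.pi/2) := by
      rw [Up_mul, hang]
    have e2 : Up p (-((c:ℝ)*Real.pi/n))
        = ((axisC p : UG') : M2') * Uz (-((c:ℝ)*Real.pi/n)) * (((axisC p)⁻¹ : UG') : M2') := by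
      rw [axisC_Uz, mul_assoc, UG_mul_inv, mul_one]
    rw [e1, e2, Uz_neg]
    simp only [UG_coe_mul, uPauli_coe, uQuarter_coe]
    simp only [mul_smul_comm, smul_mul_assoc]
    congr 1
    simp [mul_assoc]

lemma canonical_to_word (n : ℕ) (hn : 0 < n) (hne : Even n) :
    ∀ (L : List (RotAxis × ℕ)), GoodList n L → ∀ (E : UG'), E ∈ Cliff →
    ∃ (w : List (UG' × ℕ)) (E' : UG') (φ : ℝ),
      WordP n w E' (Complex.exp (I*(φ:ℂ)) • (Lprod n L * (E : M2'))) ∧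
      (∀ x ∈ w, 1 ≤ x.2) ∧ wcost w = Lwt n L := by
  intro L
  induction L with
  | nil =>
      intro _ E hE
      refine ⟨[], E, 0, ⟨by simp, hE, ?_⟩, by simp, by simp [wcost, Lwt_nil]⟩
      norm_num [Lprod_nil]
  | cons r t ih =>
      intro hL E hE
      have hgt : GoodList n t := ⟨(List.isChain_cons.mp hL.1).2, fun y hy => hL.2 y (by simp [hy])⟩
      have hrb : 1 ≤ r.2 ∧ r.2 < n/2 := hL.2 r (by simp)
      obtain ⟨w', E', φ', hW', hpos', hcost'⟩ := ih hgt E hE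
      obtain ⟨A, B, χ, hA, hB, hrot⟩ := rot_word n hn hne r.1 r.2 hrb.1 hrb.2
      have hc1 : 1 ≤ min r.2 (n/2 - r.2) := by omega
      have key : Complex.exp (I*((φ' - χ : ℝ):ℂ)) • (Lprod n (r :: t) * (E : M2'))
          = ((A : M2') * Uz (((min r.2 (n/2-r.2) : ℕ):ℝ)*Real.pi/n) * (B : M2')) *
            ((w'.map fun x => (x.1 : M2') * Uz ((x.2:ℝ) * Real.pi / n)).prod * (E' : M2')) := by
        rw [Lprod_cons, mul_assoc, hrot, smul_mul_assoc, smul_smul, ← exp_I_add]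
        rw [show φ' - χ + χ = φ' from by ring]
        all_goals try rw [← hW'.2.2, mul_smul_comm]
        all_goals try simp [mul_assoc]
      cases w' with
      | nil =>
          refine ⟨[(A, min r.2 (n/2 - r.2))], B * E', φ' - χ,
            ⟨by intro x hx; simp only [List.mem_singleton] at hx; subst hx; exact hA,
             mul_mem hB hW'.2.1, ?_⟩,
            by intro x hx; simp only [List.mem_singleton] at hx; subst hx; exact hc1, ?_⟩
          · rw [key]
            simp [mul_assoc]
          · simp only [wcost, List.map_nil, List.sum_nil] at hcost'
            simp only [wcost, List.map_cons, List.map_nil, List.sum_cons, List.sum_nil, Lwt_cons]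
            omega
      | cons y t' =>
          refine ⟨(A, min r.2 (n/2 - r.2)) :: (B * y.1, y.2) :: t', E', φ' - χ,
            ⟨?_, hW'.2.1, ?_⟩, ?_, ?_⟩
          · intro x hx
            rcases List.mem_cons.mp hx with rfl | hx2
            · exact hA
            · rcases List.mem_cons.mp hx2 with rfl | hx3
              · exact mul_mem hB (hW'.1 y (by simp))
              · exact hW'.1 x (by simp [hx3])
          · rw [key]
            simp only [List.map_cons, List.prod_cons, UG_coe_mul]
            simp [mul_assoc]
          · intro x hx
            rcases List.mem_cons.mp hx with rfl | hx2
            · exact hc1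
            · rcases List.mem_cons.mp hx2 with rfl | hx3
              · exact hpos' y (by simp)
              · exact hpos' x (by simp [hx3])
          · simp only [wcost, List.map_cons, List.sum_cons, Lwt_cons] at hcost' ⊢
            omega

-- ============== Layer 7: conversions and nonemptiness ==============

lemma sum_range_eq_list (l : ℕ) (f : ℕ → ℕ) :
    ∑ i ∈ Finset.range l, f i = ((List.range l).map f).sum := by
  induction l with
  | zero => simp
  | succ l ih => rw [Finset.sum_range_succ, List.range_succ]; simp [ih]

lemma range_map_eq {α β : Type*} (L : List α) (f : ℕ → β) (g : α → β)
    (h : ∀ (i : ℕ) (hi : i < L.length), f i = g (L[i]'hi)) :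
    (List.range L.length).map f = L.map g := by
  apply List.ext_getElem (by simp)
  intro i h1 h2
  simp only [List.getElem_map, List.getElem_range]
  exact h i (by simpa using h2)

lemma exp_smul_comb (α β : ℝ) (X : M2') :
    Complex.exp (I*(α:ℂ)) • Complex.exp (I*(β:ℂ)) • X
      = Complex.exp (I*((α+β:ℝ):ℂ)) • X := by
  rw [smul_smul, ← exp_I_add]

lemma smul_shift (φ ψ : ℝ) {A X : M2'}
    (h : Complex.exp (I*(φ:ℂ)) • A = Complex.exp (I*(ψ:ℂ)) • X) :
    A = Complex.exp (I*((ψ-φ:ℝ):ℂ)) • X := by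
  have h2 := congrArg (fun M => Complex.exp (I*((-φ:ℝ):ℂ)) • M) h
  rw [exp_smul_comb, exp_smul_comb] at h2
  rw [show -φ + φ = 0 from by ring] at h2
  rw [show (-φ + ψ) = ψ - φ from by ring] at h2
  norm_num at h2
  rw [show ((ψ - φ:ℝ):ℂ) = (ψ:ℂ) - (φ:ℂ) from by push_cast; ring]
  exact h2

lemma Uz_two_pi : Uz (2*Real.pi) = 1 := by
  rw [Uz, exp_I_two_pi]
  ext i j; fin_cases i <;> fin_cases j <;> simp [Matrix.one_apply]

/-- `V` can be written as a word. -/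
def HasWordU (n : ℕ) (V : UG') : Prop :=
  ∃ (w : List (UG' × ℕ)) (E : UG') (φ : ℝ),
    WordP n w E (Complex.exp (I*(φ:ℂ)) • (V : M2')) ∧ (∀ x ∈ w, 1 ≤ x.2)

lemma hasWord_cliff (n : ℕ) {Cx : UG'} (hC : Cx ∈ Cliff) : HasWordU n Cx := by
  refine ⟨[], Cx, 0, ⟨by simp, hC, ?_⟩, by simp⟩
  norm_num

lemma hasWord_uzgen (n : ℕ) {u : UG'} (hu : (u : M2') = Uz (Real.pi/n)) : HasWordU n u := by
  refine ⟨[((1:UG'), 1)], 1, 0, ⟨by simp [one_mem], one_mem _, ?_⟩, by simp⟩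
  have h1 : (((1:ℕ):ℝ))*Real.pi/(n:ℝ) = Real.pi/n := by push_cast; ring
  norm_num [hu, h1]

lemma hasWord_uzgen_inv (n : ℕ) (hn : 0 < n) {u : UG'}
    (hu : ((u⁻¹ : UG') : M2') = Uz (Real.pi/n)) : HasWordU n u := by
  have hn' : (n:ℝ) ≠ 0 := Nat.cast_ne_zero.mpr hn.ne'
  have hkey : Uz (((2*n-1:ℕ):ℝ)*Real.pi/n) * Uz (Real.pi/n) = 1 := by
    have hcast : ((2*n-1:ℕ):ℝ) = 2*(n:ℝ) - 1 := by
      have h1 : (1:ℕ) ≤ 2*n := by omega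
      push_cast [Nat.cast_sub h1]; ring
    have hang : ((2*n-1:ℕ):ℝ)*Real.pi/n + Real.pi/n = 2*Real.pi := by
      rw [hcast]; field_simp; ring
    rw [Uz_mul, hang, Uz_two_pi]
  have hueq : (u : M2') = Uz (((2*n-1:ℕ):ℝ)*Real.pi/n) := by
    have h1 : (u : M2') * Uz (Real.pi/n) = 1 := by rw [← hu]; exact UG_mul_inv u
    calc (u : M2') = (u : M2') * (Uz (Real.pi/n) * Uz (((2*n-1:ℕ):ℝ)*Real.pi/n)) := by
          rw [Uz_mul, show Real.pi/(n:ℝ) + ((2*n-1:ℕ):ℝ)*Real.pi/n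
              = ((2*n-1:ℕ):ℝ)*Real.pi/n + Real.pi/n from by ring, ← Uz_mul, hkey, mul_one]
      _ = ((u : M2') * Uz (Real.pi/n)) * Uz (((2*n-1:ℕ):ℝ)*Real.pi/n) := by rw [mul_assoc]
      _ = Uz (((2*n-1:ℕ):ℝ)*Real.pi/n) := by rw [h1, one_mul]
  refine ⟨[((1:UG'), 2*n-1)], 1, 0, ⟨by simp [one_mem], one_mem _, ?_⟩, by simp; omega⟩
  norm_num [hueq]

lemma hasWord_mul (n : ℕ) {V W : UG'} (hV : HasWordU n V) (hW : HasWordU n W) :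
    HasWordU n (V * W) := by
  obtain ⟨w1, E1, φ1, ⟨h1m, h1E, h1V⟩, h1p⟩ := hV
  obtain ⟨w2, E2, φ2, ⟨h2m, h2E, h2V⟩, h2p⟩ := hW
  have key : Complex.exp (I*((φ1+φ2:ℝ):ℂ)) • ((V*W : UG') : M2')
      = ((w1.map fun x => (x.1 : M2') * Uz ((x.2:ℝ) * Real.pi / n)).prod * (E1 : M2')) *
        ((w2.map fun x => (x.1 : M2') * Uz ((x.2:ℝ) * Real.pi / n)).prod * (E2 : M2')) := by
    rw [UG_coe_mul, ← exp_smul_comb, ← mul_smul_comm, h2V, ← smul_mul_assoc, h1V]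
  cases w2 with
  | nil =>
      refine ⟨w1, E1 * E2, φ1 + φ2, ⟨h1m, mul_mem h1E h2E, ?_⟩, h1p⟩
      rw [key]
      simp [mul_assoc]
  | cons y t2 =>
      refine ⟨w1 ++ ((E1 * y.1, y.2) :: t2), E2, φ1 + φ2, ⟨?_, h2E, ?_⟩, ?_⟩
      · intro x hx
        rcases List.mem_append.mp hx with h | h
        · exact h1m x h
        · rcases List.mem_cons.mp h with rfl | h'
          · exact mul_mem h1E (h2m y (by simp))
          · exact h2m x (by simp [h'])
      · rw [key]
        simp only [List.map_append, List.prod_append, List.map_cons, List.prod_cons, UG_coe_mul]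
        simp [mul_assoc]
      · intro x hx
        rcases List.mem_append.mp hx with h | h
        · exact h1p x h
        · rcases List.mem_cons.mp h with rfl | h'
          · exact h2p y (by simp)
          · exact h2p x (by simp [h'])

lemma hasWord_one (n : ℕ) : HasWordU n 1 := hasWord_cliff n (one_mem _)

lemma gcc_hasWord (n : ℕ) (hn : 0 < n) (U : UG') (hU : U ∈ Gcc n) : HasWordU n U := by
  have hU' : U ∈ (Subgroup.closure ((Cliff : Set UG') ∪
      {u : UG' | (u : M2') = Uz (Real.pi / n)})).toSubmonoid := hU
  rw [Subgroup.closure_toSubmonoid] at hU'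
  clear hU
  induction hU' using Submonoid.closure_induction with
  | mem x hx =>
      rcases hx with hx | hx
      · rcases hx with hx | hx
        · exact hasWord_cliff n hx
        · exact hasWord_uzgen n hx
      · rw [Set.mem_inv] at hx
        rcases hx with hx | hx
        · exact hasWord_cliff n ((Subgroup.inv_mem_iff _).mp hx)
        · exact hasWord_uzgen_inv n hn hx
  | one => exact hasWord_one n
  | mul x y hx hy ihx ihy => exact hasWord_mul n ihx ihy

lemma word_mem_shape (n : ℕ) (U : UG') (w : List (UG' × ℕ)) (E : UG') (φ : ℝ)
    (hW : WordP n w E (Complex.exp (I*(φ:ℂ)) • (U : M2'))) (hpos : ∀ x ∈ w, 1 ≤ x.2) :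
    ∃ (l : ℕ) (C : ℕ → M2') (s : ℕ → ℕ) (φ' : ℝ),
      (∀ i ≤ l, ∃ c ∈ Cliff, (c : M2') = C i) ∧
      (∀ i < l, 1 ≤ s i) ∧
      Complex.exp (I * φ') • (U : M2') =
        ((List.range l).map fun i => C i * Uz ((s i : ℝ) * Real.pi / n)).prod * C l ∧
      wcost w = ∑ i ∈ Finset.range l, s i := by
  refine ⟨w.length, fun i => if h : i < w.length then ((w[i]'h).1 : M2') else (E : M2'),
    fun i => if h : i < w.length then (w[i]'h).2 else 1, φ, ?_, ?_, ?_, ?_⟩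
  · intro i hi
    by_cases h : i < w.length
    · exact ⟨(w[i]'h).1, hW.1 _ (List.getElem_mem _), by simp [h]⟩
    · exact ⟨E, hW.2.1, by simp [h]⟩
  · intro i hi
    beta_reduce
    rw [dif_pos hi]
    exact hpos _ (List.getElem_mem _)
  · rw [hW.2.2]
    congr 1
    · congr 1
      refine (range_map_eq w _ _ ?_).symm
      intro i hi
      beta_reduce
      rw [dif_pos hi, dif_pos hi]
    · beta_reduce
      rw [dif_neg (lt_irrefl _)]
  · rw [sum_range_eq_list, wcost]
    congr 1
    refine (range_map_eq w _ _ ?_).symm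
    intro i hi
    beta_reduce
    rw [dif_pos hi]

lemma fun_word_to_list (n : ℕ) (U : UG') (l : ℕ) (C : ℕ → M2') (s : ℕ → ℕ) (φ : ℝ)
    (h1 : ∀ i ≤ l, ∃ c ∈ Cliff, (c : M2') = C i)
    (h3 : Complex.exp (I * φ) • (U : M2') =
        ((List.range l).map fun i => C i * Uz ((s i : ℝ) * Real.pi / n)).prod * C l) :
    ∃ (w : List (UG' × ℕ)) (E : UG'),
      WordP n w E (Complex.exp (I*(φ:ℂ)) • (U : M2')) ∧
      wcost w = ∑ i ∈ Finset.range l, s i := by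
  classical
  choose c hc hceq using h1
  refine ⟨(List.range l).map (fun i => (if h : i ≤ l then c i h else 1, s i)),
    c l le_rfl, ⟨?_, hc l le_rfl, ?_⟩, ?_⟩
  · intro x hx
    simp only [List.mem_map, List.mem_range] at hx
    obtain ⟨i, hi, rfl⟩ := hx
    simp only
    rw [dif_pos hi.le]
    exact hc i hi.le
  · rw [h3, ← hceq l le_rfl, List.map_map]
    congr 1
    all_goals try congr 1
    all_goals apply List.map_congr_left
    intro i hi
    simp only [List.mem_range] at hi
    simp only [Function.comp]
    rw [dif_pos hi.le, hceq i hi.le]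
  · rw [wcost, List.map_map, sum_range_eq_list]
    congr 1
    all_goals
      apply List.map_congr_left
      intro i hi
      rfl


/-- `U = (∏_{i=1}^{m} U_{pᵢ}(aᵢπ/n)) · D` is a canonical decomposition of `U`. -/
def IsCanonical (n m : ℕ) (p : ℕ → RotAxis) (a : ℕ → ℕ)
    (D U : Matrix (Fin 2) (Fin 2) ℂ) : Prop :=
  (∀ i, i + 1 < m → p i ≠ p (i + 1)) ∧
  (∀ i < m, 1 ≤ a i ∧ a i < n / 2) ∧
  (∃ φ : ℝ, ∃ C ∈ Cliff, Complex.exp (I * φ) • D = (C : Matrix (Fin 2) (Fin 2) ℂ)) ∧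
  U = ((List.range m).map fun i => Up (p i) ((a i : ℝ) * Real.pi / n)).prod * D

/-- `𝒯ₙ(U)`: the minimal number of `U_z(π/n)` gates needed to implement `U` up to a
global phase, i.e. the minimum of `Σ sᵢ` over all expressions
`e^{iφ}U = C₁ U_z(s₁π/n) C₂ ⋯ C_l U_z(s_lπ/n) C_{l+1}` with `Cᵢ ∈ 𝒞` and `sᵢ ≥ 1`. -/
noncomputable def Tcost (n : ℕ) (U : Matrix.unitaryGroup (Fin 2) ℂ) : ℕ :=
  sInf {t : ℕ | ∃ (l : ℕ) (C : ℕ → Matrix (Fin 2) (Fin 2) ℂ) (s : ℕ → ℕ) (φ : ℝ),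
    (∀ i ≤ l, ∃ c ∈ Cliff, (c : Matrix (Fin 2) (Fin 2) ℂ) = C i) ∧
    (∀ i < l, 1 ≤ s i) ∧
    Complex.exp (I * φ) • (U : Matrix (Fin 2) (Fin 2) ℂ) =
      ((List.range l).map fun i => C i * Uz ((s i : ℝ) * Real.pi / n)).prod * C l ∧
    t = ∑ i ∈ Finset.range l, s i}

-- ============== Layer 8: main theorem ==============

def TSet (n : ℕ) (U : UG') : Set ℕ :=
  {t : ℕ | ∃ (l : ℕ) (C : ℕ → Matrix (Fin 2) (Fin 2) ℂ) (s : ℕ → ℕ) (φ : ℝ),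
    (∀ i ≤ l, ∃ c ∈ Cliff, (c : Matrix (Fin 2) (Fin 2) ℂ) = C i) ∧
    (∀ i < l, 1 ≤ s i) ∧
    Complex.exp (I * φ) • (U : Matrix (Fin 2) (Fin 2) ℂ) =
      ((List.range l).map fun i => C i * Uz ((s i : ℝ) * Real.pi / n)).prod * C l ∧
    t = ∑ i ∈ Finset.range l, s i}

lemma Tcost_eq (n : ℕ) (U : UG') : Tcost n U = sInf (TSet n U) := rfl

lemma word_mem_TSet (n : ℕ) (U : UG') (w : List (UG' × ℕ)) (E : UG') (φ : ℝ)
    (hW : WordP n w E (Complex.exp (I*(φ:ℂ)) • (U : M2'))) (hpos : ∀ x ∈ w, 1 ≤ x.2) :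
    wcost w ∈ TSet n U := by
  obtain ⟨l, C, s, φ', a1, a2, a3, a4⟩ := word_mem_shape n U w E φ hW hpos
  exact ⟨l, C, s, φ', a1, a2, a3, a4⟩


/-- Every `U ∈ 𝒢ₙ` admits a canonical decomposition whose parameters satisfy
`Σᵢ min(aᵢ, n/2 − aᵢ) = 𝒯ₙ(U)`. -/
theorem stmt3 (n : ℕ) (hn : 0 < n) (hne : Even n)
    (U : Matrix.unitaryGroup (Fin 2) ℂ) (hU : U ∈ Gcc n) :
    ∃ (m : ℕ) (p : ℕ → RotAxis) (a : ℕ → ℕ) (D : Matrix (Fin 2) (Fin 2) ℂ),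
      IsCanonical n m p a D (U : Matrix (Fin 2) (Fin 2) ℂ) ∧
      ∑ i ∈ Finset.range m, min (a i) (n / 2 - a i) = Tcost n U := by
  classical
  -- nonemptiness of the cost set
  obtain ⟨w0, E0, φ0, hW0, hpos0⟩ := gcc_hasWord n hn U hU
  have hnonempty : (TSet n U).Nonempty := ⟨_, word_mem_TSet n U w0 E0 φ0 hW0 hpos0⟩
  -- an optimal word
  have hTmem : Tcost n U ∈ TSet n U := by rw [Tcost_eq]; exact Nat.sInf_mem hnonempty
  obtain ⟨l, C, s, φ, h1, h2, h3, h4⟩ := hTmem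
  obtain ⟨w, E, hWP, hwcost⟩ := fun_word_to_list n U l C s φ h1 h3
  -- direction A: canonical form with weight ≤ Tcost
  obtain ⟨L, Dg, ψ, hL, hDg, hVeq, hwt⟩ := word_to_canonical n hn hne w E _ hWP
  have hXU : Lprod n L * (Dg : M2') = Complex.exp (I*((φ-ψ:ℝ):ℂ)) • (U : M2') :=
    smul_shift ψ φ hVeq.symm
  have hUX : (U : M2') = Complex.exp (I*((ψ-φ:ℝ):ℂ)) • (Lprod n L * (Dg : M2')) :=
    smul_shift φ ψ hVeq
  -- direction B: canonical form gives a word of the same cost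
  obtain ⟨w2, E2, φ2, hW2, hpos2, hcost2⟩ := canonical_to_word n hn hne L hL Dg hDg
  have hW2' : WordP n w2 E2
      (Complex.exp (I*((φ2+(φ-ψ):ℝ):ℂ)) • (U : M2')) := by
    refine ⟨hW2.1, hW2.2.1, ?_⟩
    rw [← exp_smul_comb, ← hXU]
    exact hW2.2.2
  have hmem2 : wcost w2 ∈ TSet n U := word_mem_TSet n U w2 E2 _ hW2' hpos2
  have hge : Tcost n U ≤ Lwt n L := by
    rw [Tcost_eq, ← hcost2]
    exact Nat.sInf_le hmem2
  have hle : Lwt n L ≤ Tcost n U := by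
    calc Lwt n L ≤ wcost w := hwt
    _ = Tcost n U := by rw [hwcost, ← h4]
  have hLwt : Lwt n L = Tcost n U := le_antisymm hle hge
  -- assemble the canonical decomposition
  refine ⟨L.length, fun i => (L.getD i (RotAxis.x, 0)).1, fun i => (L.getD i (RotAxis.x, 0)).2,
    Complex.exp (I*((ψ-φ:ℝ):ℂ)) • (Dg : M2'), ⟨?_, ?_, ?_, ?_⟩, ?_⟩
  · -- alternation
    intro i hi
    have hc := List.isChain_iff_getElem.mp hL.1 i (by omega)
    beta_reduce
    rw [List.getD_eq_getElem _ _ (by omega : i < L.length),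
      List.getD_eq_getElem _ _ (by omega : i + 1 < L.length)]
    simpa using hc
  · -- bounds
    intro i hi
    beta_reduce
    rw [List.getD_eq_getElem _ _ hi]
    exact hL.2 _ (List.getElem_mem hi)
  · -- global phase condition on D
    refine ⟨φ - ψ, Dg, hDg, ?_⟩
    rw [exp_smul_comb, show (φ-ψ)+(ψ-φ) = 0 from by ring]
    norm_num
  · -- the product decomposition
    have hmap : ((List.range L.length).map fun i =>
        Up ((L.getD i (RotAxis.x,0)).1) (((L.getD i (RotAxis.x,0)).2 : ℝ) * Real.pi / n)).prod
        = Lprod n L := by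
      rw [Lprod]
      congr 1
      apply range_map_eq
      intro i hi
      rw [List.getD_eq_getElem _ _ hi]
    rw [hmap, hUX, mul_smul_comm]
  · -- the weight equation
    have hsum : ∑ i ∈ Finset.range L.length,
        min ((L.getD i (RotAxis.x,0)).2) (n/2 - (L.getD i (RotAxis.x,0)).2) = Lwt n L := by
      rw [sum_range_eq_list, Lwt]
      congr 1
      apply range_map_eq
      intro i hi
      rw [List.getD_eq_getElem _ _ hi]
    rw [hsum, hLwt]
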